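/- Let μ = (α/2)δ_{−q} + (1−α)Φ_q + (α/2)δ_q where q > 0 satisfies (α/2)q = (1−α)e^{−q²/2}/(√(2π)Φ([−q,q])). Then the 2k-th moment of μ equals (2k−1) times the 2k−2-nd moment of the absolutely continuous part (1−α)Φ_q, for all k ≥ 1. -/

import Mathlib

open Real

/-!
Integrating `(x ^ (m + 1) e^{-x²/2})' = (m + 1) x ^ m e^{-x²/2} - x ^ (m + 2) e^{-x²/2}` over
`[-q, q]` gives `∫ x^{2k} e^{-x²/2} = (2k - 1) ∫ x^{2k-2} e^{-x²/2} - 2 q^{2k-1} e^{-q²/2}`.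
The defining equation of `q` says exactly that the two atoms `±q`, of mass `α/2` each, contribute
`α q^{2k}`, which cancels the boundary term after normalisation.
-/

theorem hasDerivAt_pow_succ_mul_exp_neg_sq_div_two (m : ℕ) (x : ℝ) :
    HasDerivAt (fun x => x ^ (m + 1) * exp (-x ^ 2 / 2))
      ((m + 1) * (x ^ m * exp (-x ^ 2 / 2)) - x ^ (m + 2) * exp (-x ^ 2 / 2)) x := by
  have hpow : HasDerivAt (fun x : ℝ => x ^ (m + 1)) ((m + 1) * x ^ m) x := by
    simpa using hasDerivAt_pow (m + 1) x
  have hexponent : HasDerivAt (fun x : ℝ => -x ^ 2 / 2) (-x) x :=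
    (((hasDerivAt_pow 2 x).neg).div_const 2).congr_deriv (by ring)
  exact (hpow.mul hexponent.exp).congr_deriv (by ring)

theorem integral_pow_add_two_mul_exp_neg_sq_div_two (a b : ℝ) (m : ℕ) :
    ∫ x in a..b, x ^ (m + 2) * exp (-x ^ 2 / 2) =
      (m + 1) * (∫ x in a..b, x ^ m * exp (-x ^ 2 / 2))
        - (b ^ (m + 1) * exp (-b ^ 2 / 2) - a ^ (m + 1) * exp (-a ^ 2 / 2)) := by
  have hftc := intervalIntegral.integral_eq_sub_of_hasDerivAt
    (fun x _ => hasDerivAt_pow_succ_mul_exp_neg_sq_div_two m x)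
    (Continuous.intervalIntegrable (by fun_prop) a b)
  rw [intervalIntegral.integral_sub (Continuous.intervalIntegrable (by fun_prop) a b)
    (Continuous.intervalIntegrable (by fun_prop) a b), intervalIntegral.integral_const_mul] at hftc
  linarith

theorem integral_symm_pow_even_add_two_mul_exp_neg_sq_div_two (q : ℝ) (n : ℕ) :
    ∫ x in (-q)..q, x ^ (2 * n + 2) * exp (-x ^ 2 / 2) =
      (2 * n + 1) * (∫ x in (-q)..q, x ^ (2 * n) * exp (-x ^ 2 / 2))
        - 2 * q ^ (2 * n + 1) * exp (-q ^ 2 / 2) := by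
  rw [integral_pow_add_two_mul_exp_neg_sq_div_two, Odd.neg_pow ⟨n, rfl⟩, neg_sq]
  push_cast
  ring

theorem integral_exp_neg_sq_div_two_pos {q : ℝ} (hq : 0 < q) :
    0 < ∫ x in (-q)..q, exp (-x ^ 2 / 2) :=
  intervalIntegral.intervalIntegral_pos_of_pos (Continuous.intervalIntegrable (by fun_prop) _ _)
    (fun _ => exp_pos _) (by linarith)

theorem stmt17_general (α q : ℝ) (hq : 0 < q)
    (hqeq : α / 2 * q = (1 - α) * Real.exp (-q ^ 2 / 2) /
        (Real.sqrt (2 * π) *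
          ((1 / Real.sqrt (2 * π)) * ∫ x in (-q)..q, Real.exp (-x ^ 2 / 2))))
    (k : ℕ) (hk : 1 ≤ k) :
    α / 2 * (-q) ^ (2 * k) +
        (1 - α) * ((∫ x in (-q)..q, x ^ (2 * k) * Real.exp (-x ^ 2 / 2)) /
          ∫ x in (-q)..q, Real.exp (-x ^ 2 / 2)) +
        α / 2 * q ^ (2 * k) =
      (2 * k - 1) *
        ((1 - α) * ((∫ x in (-q)..q, x ^ (2 * k - 2) * Real.exp (-x ^ 2 / 2)) /
          ∫ x in (-q)..q, Real.exp (-x ^ 2 / 2))) := by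
  obtain ⟨n, rfl⟩ : ∃ n, k = n + 1 := ⟨k - 1, by omega⟩
  rw [show 2 * (n + 1) - 2 = 2 * n by omega, show 2 * (n + 1) = 2 * n + 2 by ring,
    Even.neg_pow ⟨n + 1, by ring⟩, integral_symm_pow_even_add_two_mul_exp_neg_sq_div_two]
  set Z := ∫ x in (-q)..q, exp (-x ^ 2 / 2)
  set E := exp (-q ^ 2 / 2)
  have hZ : Z ≠ 0 := (integral_exp_neg_sq_div_two_pos hq).ne'
  have hatoms : α / 2 * q * Z = (1 - α) * E := by
    rw [hqeq]
    field_simp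
  push_cast
  field_simp
  linear_combination (4 * q ^ (2 * n + 1)) * hatoms

/-- Let `μ = (α/2)δ_{-q} + (1-α)Φ_q + (α/2)δ_q` with `q > 0` satisfying
`(α/2)q = (1-α)e^{-q²/2}/(√(2π)Φ([-q,q]))`. Then for all `k ≥ 1` the `2k`-th moment of `μ`
equals `(2k-1)` times the `(2k-2)`-nd moment of the absolutely continuous part `(1-α)Φ_q`. -/
theorem stmt17 (α q : ℝ) (hα : α ∈ Set.Ioo (0:ℝ) 1) (hq : 0 < q)
    (hqeq : α / 2 * q = (1 - α) * Real.exp (-q ^ 2 / 2) /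
        (Real.sqrt (2 * π) *
          ((1 / Real.sqrt (2 * π)) * ∫ x in (-q)..q, Real.exp (-x ^ 2 / 2))))
    (k : ℕ) (hk : 1 ≤ k) :
    α / 2 * (-q) ^ (2 * k) +
        (1 - α) * ((∫ x in (-q)..q, x ^ (2 * k) * Real.exp (-x ^ 2 / 2)) /
          ∫ x in (-q)..q, Real.exp (-x ^ 2 / 2)) +
        α / 2 * q ^ (2 * k) =
      (2 * k - 1) *
        ((1 - α) * ((∫ x in (-q)..q, x ^ (2 * k - 2) * Real.exp (-x ^ 2 / 2)) /
          ∫ x in (-q)..q, Real.exp (-x ^ 2 / 2))) :=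
  stmt17_general α q hq hqeq k hk
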